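/- arXiv:1307.3809 — 8 statements merged into one kernel-verified Lean document; each statement's English description precedes it below -/
import Mathlib

section
/- Gauss–Bonnet for finite simple graphs: for every finite simple graph G=(V,E), the curvatures sum to the Euler characteristic: Σ_{x∈V} K(x) = χ(G). -/
open Classical Finset

/-- The Euler characteristic of a finite simple graph:
`χ(G) = Σ_{k≥1} (−1)^{k+1} v_k(G)`, where `v_k` counts cliques with `k` vertices. -/
noncomputable def eulerChar {V : Type*} [Fintype V] (G : SimpleGraph V) : ℤ :=
  ∑ s ∈ Finset.univ.powerset.filter
      (fun s : Finset V => s.Nonempty ∧ G.IsClique (s : Set V)),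
    (-1 : ℤ) ^ (s.card + 1)

/-- The Euler curvature of `G` at a vertex `x`:
`K(x) = Σ_{c clique, x ∈ c} (−1)^{|c|+1}/|c|`. -/
noncomputable def curvature {V : Type*} [Fintype V] (G : SimpleGraph V) (x : V) : ℚ :=
  ∑ s ∈ Finset.univ.powerset.filter
      (fun s : Finset V => x ∈ s ∧ G.IsClique (s : Set V)),
    (-1 : ℚ) ^ (s.card + 1) / (s.card : ℚ)

/-- Gauss–Bonnet for finite simple graphs: the curvatures sum up to the Euler characteristic. -/
theorem gauss_bonnet {V : Type*} [Fintype V] (G : SimpleGraph V) :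
    ∑ x : V, curvature G x = (eulerChar G : ℚ) := by
  unfold curvature eulerChar
  push_cast
  have h : ∀ x : V,
      (∑ s ∈ Finset.univ.powerset.filter
        (fun s : Finset V => x ∈ s ∧ G.IsClique (s : Set V)),
        (-1 : ℚ) ^ (s.card + 1) / (s.card : ℚ))
      = ∑ s ∈ (Finset.univ.powerset : Finset (Finset V)),
          if x ∈ s ∧ G.IsClique (s : Set V) then
            (-1 : ℚ) ^ (s.card + 1) / (s.card : ℚ) else 0 := by
    intro x
    rw [Finset.sum_filter]
  simp_rw [h]
  rw [Finset.sum_comm]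
  rw [Finset.sum_filter]
  refine Finset.sum_congr rfl ?_
  intro s _
  by_cases hc : G.IsClique (s : Set V)
  · by_cases hne : s.Nonempty
    · simp only [hc, hne, and_true, if_true]
      have : (∑ x : V, if x ∈ s then (-1 : ℚ) ^ (s.card + 1) / (s.card : ℚ) else 0)
          = s.card * ((-1 : ℚ) ^ (s.card + 1) / (s.card : ℚ)) := by
        rw [Finset.sum_ite_mem, Finset.univ_inter, Finset.sum_const, nsmul_eq_mul]
      rw [this]
      have hne' : (s.card : ℚ) ≠ 0 := by
        simpa [Finset.card_eq_zero] using hne.ne_empty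
      field_simp
    · have : s = ∅ := Finset.not_nonempty_iff_eq_empty.mp hne
      subst this
      simp
  · simp [hc]
end

section
/- Poincaré–Hopf for finite simple graphs: for every finite simple graph G=(V,E) and every injective function f : V → ℝ, the indices sum to the Euler characteristic: Σ_{x∈V} i_f(x) = χ(G). -/
open Classical Finset

/-- The Poincaré–Hopf index of an injective function `f` at a vertex `x`:
`i_f(x) = 1 − χ(S_f^−(x))`, where `S_f^−(x)` is the subgraph induced on the
neighbors `y` of `x` with `f(y) < f(x)`. -/
noncomputable def fIndex {V : Type*} [Fintype V] (G : SimpleGraph V) (f : V → ℝ) (x : V) : ℤ :=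
  1 - eulerChar (G.induce {y | G.Adj x y ∧ f y < f x})

/-- Summing `(-1)^|t|` over all cliques including the empty set gives `1 - χ`. -/
lemma sum_cliques_or_empty {W : Type*} [Fintype W] (H : SimpleGraph W) :
    ∑ t ∈ Finset.univ.powerset.filter (fun t : Finset W => H.IsClique (t : Set W)),
      (-1 : ℤ) ^ t.card = 1 - eulerChar H := by
  have h : Finset.univ.powerset.filter (fun t : Finset W => H.IsClique (t : Set W)) =
      insert ∅ (Finset.univ.powerset.filter
        (fun t : Finset W => t.Nonempty ∧ H.IsClique (t : Set W))) := by
    ext t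
    by_cases ht : t = ∅
    · subst ht; simp [SimpleGraph.isClique_empty]
    · simp [Finset.mem_insert, Finset.mem_filter, ht, Finset.nonempty_iff_ne_empty]
  rw [h, Finset.sum_insert (by simp), eulerChar]
  have : ∀ t : Finset W, (-1 : ℤ) ^ (t.card + 1) = -((-1 : ℤ) ^ t.card) := by
    intro t; rw [pow_succ]; ring
  simp only [this, Finset.sum_neg_distrib, Finset.card_empty, pow_zero]
  ring

/-- Poincaré–Hopf for finite simple graphs: for any injective `f : V → ℝ`,
the indices sum up to the Euler characteristic. -/
theorem poincare_hopf {V : Type*} [Fintype V] (G : SimpleGraph V)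
    (f : V → ℝ) (hf : Function.Injective f) :
    ∑ x : V, fIndex G f x = eulerChar G := by
  rcases isEmpty_or_nonempty V with h | h
  · rw [Finset.univ_eq_empty, Finset.sum_empty, eulerChar, Finset.univ_eq_empty,
      Finset.powerset_empty, Finset.filter_singleton]
    simp
  · -- choose the max vertex of each finset
    have hgex : ∀ s : Finset V, ∃ x : V, s.Nonempty → x ∈ s ∧ ∀ y ∈ s, f y ≤ f x := by
      intro s
      by_cases hs : s.Nonempty
      · obtain ⟨x, hx, hmax⟩ := s.exists_max_image f hs
        exact ⟨x, fun _ => ⟨hx, hmax⟩⟩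
      · exact ⟨Classical.arbitrary V, fun hns => absurd hns hs⟩
    choose g hg using hgex
    rw [eulerChar, ← Finset.sum_fiberwise_of_maps_to (g := g) (fun s _ => Finset.mem_univ (g s))]
    apply Finset.sum_congr rfl
    intro x _
    -- inner sum equals fIndex
    set W : Set V := {y | G.Adj x y ∧ f y < f x} with hW
    rw [fIndex, ← sum_cliques_or_empty (G.induce W)]
    symm
    refine Finset.sum_nbij' (i := fun s => (s.erase x).subtype (· ∈ W))
      (j := fun t => insert x (t.map (Function.Embedding.subtype (· ∈ W)))) ?_ ?_ ?_ ?_ ?_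
    · -- i maps into target
      intro s hs
      simp only [Finset.mem_filter, Finset.mem_powerset] at hs
      obtain ⟨⟨-, hne, hcl⟩, hgs⟩ := hs
      simp only [Finset.mem_filter, Finset.mem_powerset]
      refine ⟨Finset.subset_univ _, ?_⟩
      intro a ha b hb hab
      rw [Finset.mem_coe, Finset.mem_subtype] at ha hb
      have h1 : (a : V) ∈ s := Finset.mem_of_mem_erase ha
      have h2 : (b : V) ∈ s := Finset.mem_of_mem_erase hb
      have : G.Adj (a : V) (b : V) := hcl h1 h2 (fun hc => hab (Subtype.ext hc))
      exact this
    · -- j maps into source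
      intro t ht
      simp only [Finset.mem_filter, Finset.mem_powerset] at ht ⊢
      have hxnot : x ∉ t.map (Function.Embedding.subtype (· ∈ W)) := by
        intro hc
        simp only [Finset.mem_map, Function.Embedding.coe_subtype] at hc
        obtain ⟨⟨y, hy⟩, -, hyx⟩ := hc
        exact lt_irrefl (f x) (hyx ▸ hy.2)
      have hcl : G.IsClique ((insert x (t.map (Function.Embedding.subtype (· ∈ W))) : Finset V) : Set V) := by
        rw [Finset.coe_insert, SimpleGraph.isClique_insert]
        constructor
        · intro a ha b hb hab
          simp only [Finset.coe_map, Set.mem_image, Finset.mem_coe,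
            Function.Embedding.coe_subtype] at ha hb
          obtain ⟨a', ha', rfl⟩ := ha
          obtain ⟨b', hb', rfl⟩ := hb
          exact ht.2 ha' hb' (fun hc => hab (congrArg _ hc))
        · intro b hb hbx
          simp only [Finset.coe_map, Set.mem_image, Finset.mem_coe,
            Function.Embedding.coe_subtype] at hb
          obtain ⟨b', -, rfl⟩ := hb
          exact b'.2.1
      refine ⟨⟨Finset.subset_univ _, Finset.insert_nonempty _ _, hcl⟩, ?_⟩
      -- g of this set is x
      set u := insert x (t.map (Function.Embedding.subtype (· ∈ W))) with hu
      have hne : u.Nonempty := Finset.insert_nonempty _ _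
      obtain ⟨hmem, hmax⟩ := hg u hne
      have hxu : x ∈ u := Finset.mem_insert_self _ _
      have h1 : f x ≤ f (g u) := hmax x hxu
      have h2 : f (g u) ≤ f x := by
        rcases Finset.mem_insert.mp hmem with hc | hc
        · rw [hc]
        · simp only [Finset.mem_map, Function.Embedding.coe_subtype] at hc
          obtain ⟨⟨y, hy⟩, -, hyy⟩ := hc
          rw [← hyy]; exact le_of_lt hy.2
      exact hf (le_antisymm h2 h1)
    · -- left inverse
      intro s hs
      simp only [Finset.mem_filter, Finset.mem_powerset] at hs
      obtain ⟨⟨-, hne, hcl⟩, hgs⟩ := hs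
      obtain ⟨hxs, hmax⟩ := hg s hne
      rw [hgs] at hxs hmax
      have herase : (s.erase x).filter (· ∈ W) = s.erase x := by
        apply Finset.filter_true_of_mem
        intro y hy
        have hys : y ∈ s := Finset.mem_of_mem_erase hy
        have hyx : y ≠ x := Finset.ne_of_mem_erase hy
        refine ⟨hcl hxs hys (Ne.symm hyx), ?_⟩
        exact lt_of_le_of_ne (hmax y hys) (fun hc => hyx (hf hc))
      rw [Finset.subtype_map, herase, Finset.insert_erase hxs]
    · -- right inverse
      intro t ht
      have hxnot : x ∉ t.map (Function.Embedding.subtype (· ∈ W)) := by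
        intro hc
        simp only [Finset.mem_map, Function.Embedding.coe_subtype] at hc
        obtain ⟨⟨y, hy⟩, -, hyx⟩ := hc
        exact lt_irrefl (f x) (hyx ▸ hy.2)
      rw [Finset.erase_insert hxnot]
      ext a
      simp only [Finset.mem_subtype, Finset.mem_map, Function.Embedding.coe_subtype]
      constructor
      · rintro ⟨b, hb, hba⟩
        rwa [show b = a from Subtype.ext hba] at hb
      · intro ha; exact ⟨a, ha, rfl⟩
    · -- values agree
      intro s hs
      simp only [Finset.mem_filter, Finset.mem_powerset] at hs
      obtain ⟨⟨-, hne, hcl⟩, hgs⟩ := hs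
      obtain ⟨hxs, hmax⟩ := hg s hne
      rw [hgs] at hxs hmax
      have : ((s.erase x).subtype (· ∈ W)).card = s.card - 1 := by
        rw [Finset.card_subtype]
        have herase : (s.erase x).filter (· ∈ W) = s.erase x := by
          apply Finset.filter_true_of_mem
          intro y hy
          have hys : y ∈ s := Finset.mem_of_mem_erase hy
          have hyx : y ≠ x := Finset.ne_of_mem_erase hy
          refine ⟨hcl hxs hys (Ne.symm hyx), ?_⟩
          exact lt_of_le_of_ne (hmax y hys) (fun hc => hyx (hf hc))
        rw [herase, Finset.card_erase_of_mem hxs]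
      rw [this]
      obtain ⟨n, hn⟩ : ∃ n, s.card = n + 1 := ⟨s.card - 1, by
        have := Finset.card_pos.mpr hne; omega⟩
      rw [hn]
      simp [pow_succ]
end

section
/- Curvature is index expectation: let G=(V,E) be a finite simple graph with |V| = n vertices and let x ∈ V. Averaging the index i_σ(x) uniformly over all n! bijections σ : V → {1, …, n} (each bijection viewed as an injective real-valued function on V) yields the curvature: (1/n!) Σ_{σ} i_σ(x) = K(x). -/
/-!
Adjoining `x` identifies the cliques of `S_f^−(x)`, the empty one included, with the cliques
through `x` on which `x` is the strict `f`-maximum; hence `i_f(x) = Σ (−1)^(|d|+1)` over those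
cliques `d`. Averaged over all orderings `σ`, a clique `d ∋ x` therefore contributes its sign times
the proportion of orderings in which `x` is the top element of `d`. Transpositions inside `d`
show that every vertex of `d` is equally likely to be on top, so this proportion is `1/|d|`.
-/

open Classical Finset

section Cliques

variable {V : Type*} [Fintype V]

lemma eulerChar_eq_one_sub_sum (G : SimpleGraph V) :
    eulerChar G = 1 - ∑ s ∈ univ.filter (fun s : Finset V => G.IsClique (s : Set V)),
      (-1 : ℤ) ^ s.card := by
  have hempty : (∅ : Finset V) ∈ univ.filter (fun s : Finset V => G.IsClique (s : Set V)) := by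
    simp
  rw [← add_sum_erase _ _ hempty, eulerChar, powerset_univ]
  have : (univ.filter fun s : Finset V => G.IsClique (s : Set V)).erase ∅ =
      univ.filter fun s : Finset V => s.Nonempty ∧ G.IsClique (s : Set V) := by
    ext s
    simp [nonempty_iff_ne_empty]
  simp only [this, card_empty, pow_zero, pow_succ, mul_neg_one, sum_neg_distrib]
  ring

lemma eulerChar_induce (G : SimpleGraph V) (S : Set V) [Fintype S] :
    eulerChar (G.induce S) = 1 - ∑ c ∈ univ.filter (fun c : Finset V => ↑c ⊆ S ∧ G.IsClique ↑c),
      (-1 : ℤ) ^ c.card := by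
  rw [eulerChar_eq_one_sub_sum]
  congr 1
  refine sum_nbij' (fun s => s.map (Function.Embedding.subtype _)) (fun c => c.subtype (· ∈ S))
    ?_ ?_ ?_ ?_ ?_
  · intro s hs
    simp_all [SimpleGraph.isClique_induce_iff, Set.image_subset_iff]
  · intro c hc
    simp only [mem_filter, mem_univ, true_and] at hc ⊢
    rw [SimpleGraph.isClique_induce_iff]
    convert hc.2
    ext v
    simpa using fun hv => hc.1 hv
  · intro s _
    ext a
    simp
  · intro c hc
    simp only [mem_filter, mem_univ, true_and] at hc
    exact subtype_map_of_mem hc.1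
  · intro s _
    simp

lemma fIndex_eq_sum (G : SimpleGraph V) (f : V → ℝ) (x : V) :
    fIndex G f x = ∑ d ∈ univ.powerset.filter (fun s : Finset V => x ∈ s ∧ G.IsClique (s : Set V)),
      if ∀ y ∈ d, y ≠ x → f y < f x then (-1 : ℤ) ^ (d.card + 1) else 0 := by
  rw [fIndex, eulerChar_induce, sub_sub_cancel, ← sum_filter, filter_filter]
  have hx : x ∉ {y | G.Adj x y ∧ f y < f x} := fun h => G.loopless.irrefl x h.1
  refine sum_nbij' (insert x) (erase · x) ?_ ?_ ?_ ?_ ?_ <;>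
    simp only [mem_filter, mem_univ, true_and, mem_powerset, subset_univ]
  · rintro c ⟨hcS, hc⟩
    refine ⟨⟨mem_insert_self x c, ?_⟩, fun y hy hyx => (hcS ((mem_insert.1 hy).resolve_left hyx)).2⟩
    rw [coe_insert]
    exact hc.insert fun y hy _ => (hcS hy).1
  · rintro d ⟨⟨hxd, hd⟩, hmax⟩
    refine ⟨fun y hy => ?_, hd.subset (coe_subset.2 (erase_subset x d))⟩
    obtain ⟨hyx, hyd⟩ := mem_erase.1 hy
    exact ⟨hd hxd hyd (Ne.symm hyx), hmax y hyd hyx⟩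
  · rintro c ⟨hcS, -⟩
    exact erase_insert fun h => hx (hcS h)
  · rintro d ⟨⟨hxd, -⟩, -⟩
    exact insert_erase hxd
  · rintro c ⟨hcS, -⟩
    rw [card_insert_of_notMem fun h => hx (hcS h), pow_succ, pow_succ]
    ring

end Cliques

section Permutations

variable {V α : Type*} {c : Finset V} {x y : V}

lemma swap_apply_mem (hx : x ∈ c) (hy : y ∈ c) {z : V} (hz : z ∈ c) : Equiv.swap x y z ∈ c := by
  rw [Equiv.swap_apply_def]
  split_ifs <;> assumption

lemma swap_trans_strictMax [LT α] (hx : x ∈ c) (hy : y ∈ c) {σ : V ≃ α}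
    (hσ : ∀ z ∈ c, z ≠ x → σ z < σ x) :
    ∀ z ∈ c, z ≠ y → ((Equiv.swap x y).trans σ) z < ((Equiv.swap x y).trans σ) y := by
  intro z hz hzy
  rw [Equiv.trans_apply, Equiv.trans_apply, Equiv.swap_apply_right]
  refine hσ _ (swap_apply_mem hx hy hz) ?_
  rwa [Ne, Equiv.swap_apply_eq_iff, Equiv.swap_apply_left]

variable [Fintype V] [Fintype α]

lemma card_filter_strictMax_eq [DecidableEq α] [LT α] [DecidableLT α] (hx : x ∈ c) (hy : y ∈ c) :
    #{σ : V ≃ α | ∀ z ∈ c, z ≠ x → σ z < σ x} = #{σ : V ≃ α | ∀ z ∈ c, z ≠ y → σ z < σ y} := by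
  have hinv : ∀ σ : V ≃ α, (Equiv.swap x y).trans ((Equiv.swap x y).trans σ) = σ := fun σ => by
    ext v
    simp
  refine card_nbij' ((Equiv.swap x y).trans ·) ((Equiv.swap x y).trans ·) ?_ ?_
    (fun σ _ => hinv σ) (fun σ _ => hinv σ) <;>
    simp only [coe_filter, mem_univ, true_and]
  · exact fun σ => swap_trans_strictMax hx hy
  · intro σ hσ
    rw [Equiv.swap_comm]
    exact swap_trans_strictMax hy hx hσ

lemma card_mul_card_filter_strictMax [LinearOrder α] (hx : x ∈ c) :
    c.card * #{σ : V ≃ α | ∀ z ∈ c, z ≠ x → σ z < σ x} = Fintype.card (V ≃ α) := by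
  set M : V → Finset (V ≃ α) := fun y => {σ : V ≃ α | ∀ z ∈ c, z ≠ y → σ z < σ y}
  have hdisj : (c : Set V).PairwiseDisjoint M := by
    intro y hy y' hy' hyy'
    exact disjoint_filter.2 fun σ _ hσ hσ' => (hσ y' hy' hyy'.symm).asymm (hσ' y hy hyy')
  have hcover : c.biUnion M = univ := by
    refine eq_univ_of_forall fun σ => mem_biUnion.2 ?_
    obtain ⟨y, hy, hmax⟩ := c.exists_max_image σ ⟨x, hx⟩
    exact ⟨y, hy, mem_filter.2
      ⟨mem_univ σ, fun z hz hzy => (hmax z hz).lt_of_ne (σ.injective.ne hzy)⟩⟩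
  calc c.card * #(M x) = ∑ y ∈ c, #(M y) :=
        (sum_const_nat fun y hy => card_filter_strictMax_eq hy hx).symm
    _ = Fintype.card (V ≃ α) := by rw [← card_biUnion hdisj, hcover, card_univ]

end Permutations

/-- Curvature is index expectation: averaging the index `i_σ(x)` uniformly over all
`n!` bijections `σ : V → {1, …, n}` (viewed as injective real-valued functions)
yields the curvature `K(x)`. -/
theorem curvature_is_index_expectation {V : Type*} [Fintype V] (G : SimpleGraph V) (x : V) :
    (∑ σ : V ≃ Fin (Fintype.card V), (fIndex G (fun v => ((σ v : ℕ) : ℝ)) x : ℚ)) /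
      (Nat.factorial (Fintype.card V) : ℚ) = curvature G x := by
  have hindex : ∀ σ : V ≃ Fin (Fintype.card V), (fIndex G (fun v => ((σ v : ℕ) : ℝ)) x : ℚ) =
      ∑ d ∈ univ.powerset.filter (fun s : Finset V => x ∈ s ∧ G.IsClique (s : Set V)),
        if ∀ y ∈ d, y ≠ x → σ y < σ x then (-1 : ℚ) ^ (d.card + 1) else 0 := fun σ => by
    simp [fIndex_eq_sum]
  rw [sum_congr rfl fun σ _ => hindex σ, sum_comm, sum_div, curvature]
  refine sum_congr rfl fun d hd => ?_
  have hcount := card_mul_card_filter_strictMax (α := Fin (Fintype.card V)) (mem_filter.1 hd).2.1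
  rw [Fintype.card_equiv (Fintype.equivFin V)] at hcount
  have hmax : _ ≠ 0 := right_ne_zero_of_mul (hcount.trans_ne (Nat.factorial_ne_zero _))
  rw [← sum_filter, sum_const, nsmul_eq_mul, ← hcount, Nat.cast_mul, mul_comm (d.card : ℚ),
    mul_div_mul_left _ _ (Nat.cast_ne_zero.2 hmax)]
end

section
/- Gauss–Bonnet for two-dimensional geometric graphs: let G=(V,E) be a finite simple graph such that for every vertex x the unit sphere S(x) (the subgraph induced on the neighbors of x) is isomorphic to a cycle graph of length d(x) ≥ 4, where d(x) is the degree of x. Then the curvature at each vertex equals K(x) = 1 − d(x)/6, and Σ_{x∈V} (1 − d(x)/6) = χ(G). -/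
open Classical Finset

/-!
The cliques through `x` are the cliques `t` of the unit sphere `S(x)` with `x` added, so
`K(x) = Σ_t (-1)^|t| / (|t| + 1)`, the empty clique included. When `S(x)` is a cycle of length
`d ≥ 4` it has one empty clique, `d` vertices, `d` edges and no triangles, whence
`K(x) = 1 - d/2 + d/3 = 1 - d/6`. Summing `K` over all vertices counts every nonempty clique `c`
of `G` exactly `|c|` times, which cancels the weight `1/|c|` and leaves `χ(G)`.
-/

theorem Finset.sum_sum_filter_mem {α M : Type*} [Fintype α] [AddCommMonoid M]
    (𝒜 : Finset (Finset α)) (g : Finset α → M) :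
    ∑ x, ∑ s ∈ 𝒜 with x ∈ s, g s = ∑ s ∈ 𝒜, s.card • g s := by
  simp_rw [sum_filter]
  rw [sum_comm]
  simp

namespace SimpleGraph

variable {V W M : Type*} [AddCommMonoid M]

theorem CliqueFree.card_lt_of_isClique {G : SimpleGraph V} {n : ℕ} (hG : G.CliqueFree n)
    {s : Finset V} (hs : G.IsClique (s : Set V)) : s.card < n := by
  by_contra! h
  obtain ⟨t, hts, ht⟩ := exists_subset_card_eq h
  exact hG t ⟨hs.subset hts, ht⟩

variable [Fintype V] [Fintype W]

noncomputable def cliques (G : SimpleGraph V) : Finset (Finset V) :=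
  univ.filter fun s => G.IsClique (s : Set V)

@[simp]
theorem mem_cliques {G : SimpleGraph V} {s : Finset V} :
    s ∈ G.cliques ↔ G.IsClique (s : Set V) := by
  simp [cliques]

theorem Iso.sum_cliques {G : SimpleGraph V} {H : SimpleGraph W} (e : G ≃g H) (f : ℕ → M) :
    ∑ s ∈ G.cliques, f s.card = ∑ t ∈ H.cliques, f t.card := by
  refine sum_equiv e.toEquiv.finsetCongr (fun s => ?_) (fun s _ => by simp)
  simp [isClique_iff, Set.Pairwise, e.map_adj_iff]

theorem sum_cliques_subset_eq_sum_cliques_induce (G : SimpleGraph V) (S : Set V) (f : ℕ → M) :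
    ∑ t ∈ G.cliques with ↑t ⊆ S, f t.card = ∑ u ∈ (G.induce S).cliques, f u.card := by
  symm
  refine sum_nbij' (·.map (Function.Embedding.subtype _)) (·.subtype (· ∈ S))
    (fun u hu => ?_) (fun t ht => ?_) (fun u _ => ?_) (fun t ht => ?_)
    (fun u _ => by rw [card_map])
  · simpa [map_subtype_subset u] using isClique_induce_iff.mp (mem_cliques.mp hu)
  · rw [mem_filter, mem_cliques] at ht
    rw [mem_cliques, isClique_induce_iff]
    refine ht.1.subset ?_
    rintro _ ⟨y, hy, rfl⟩
    simpa using hy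
  · ext; simp
  · exact subtype_map_of_mem fun y hy => (mem_filter.mp ht).2 hy

theorem sum_cliques_mem_eq_sum_cliques_subset_neighborSet (G : SimpleGraph V) (x : V)
    (f : ℕ → M) :
    ∑ s ∈ G.cliques with x ∈ s, f s.card =
      ∑ t ∈ G.cliques with ↑t ⊆ G.neighborSet x, f (t.card + 1) := by
  refine sum_nbij' (·.erase x) (insert x)
    (fun s hs => ?_) (fun t ht => ?_) (fun s hs => ?_) (fun t ht => ?_) (fun s hs => ?_)
  · rw [mem_filter, mem_cliques] at hs ⊢
    refine ⟨hs.1.subset (erase_subset x s), fun y hy => ?_⟩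
    rw [mem_coe, mem_erase] at hy
    exact hs.1 hs.2 hy.2 (Ne.symm hy.1)
  · rw [mem_filter, mem_cliques] at ht ⊢
    refine ⟨?_, mem_insert_self x t⟩
    rw [coe_insert]
    exact ht.1.insert fun y hy _ => ht.2 hy
  · exact insert_erase (mem_filter.mp hs).2
  · exact erase_insert fun hx => G.notMem_neighborSet_self ((mem_filter.mp ht).2 hx)
  · rw [card_erase_add_one (mem_filter.mp hs).2]

theorem card_cliqueFinset_zero [DecidableEq V] (G : SimpleGraph V) [DecidableRel G.Adj] :
    #(G.cliqueFinset 0) = 1 := by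
  rw [card_eq_one]
  exact ⟨∅, by ext; simp⟩

theorem card_cliqueFinset_one [DecidableEq V] (G : SimpleGraph V) [DecidableRel G.Adj] :
    #(G.cliqueFinset 1) = Fintype.card V := by
  have : G.cliqueFinset 1 = univ.map ⟨singleton, singleton_injective⟩ := by
    ext; simp [isNClique_one, eq_comm]
  rw [this, card_map, card_univ]

theorem sum_cliques_eq_sum_range [DecidableEq V] {G : SimpleGraph V} [DecidableRel G.Adj]
    {n : ℕ} (hG : G.CliqueFree n) (f : ℕ → M) :
    ∑ s ∈ G.cliques, f s.card = ∑ k ∈ range n, #(G.cliqueFinset k) • f k := by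
  rw [← sum_fiberwise_of_maps_to fun s hs =>
    mem_range.2 (hG.card_lt_of_isClique (mem_cliques.1 hs))]
  refine sum_congr rfl fun k _ => ?_
  have hfiber : {s ∈ G.cliques | s.card = k} = G.cliqueFinset k := by
    ext; simp [isNClique_iff]
  rw [← sum_const, ← hfiber]
  exact sum_congr rfl fun s hs => by rw [(mem_filter.1 hs).2]

theorem sum_cliques_of_cliqueFree_three [DecidableEq V] {G : SimpleGraph V} [DecidableRel G.Adj]
    (hG : G.CliqueFree 3) (f : ℕ → M) :
    ∑ s ∈ G.cliques, f s.card = f 0 + Fintype.card V • f 1 + #(G.cliqueFinset 2) • f 2 := by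
  simp [sum_cliques_eq_sum_range hG, sum_range_succ, card_cliqueFinset_zero,
    card_cliqueFinset_one]

open Fin.CommRing in
theorem cycleGraph_cliqueFree_three {n : ℕ} (hn : 4 ≤ n) : (cycleGraph n).CliqueFree 3 := by
  obtain ⟨m, rfl⟩ := Nat.exists_eq_add_of_le' hn
  have h3 : (3 : Fin (m + 4)) ≠ 0 := by simp [Fin.ext_iff, Nat.mod_eq_of_lt]
  intro s hs
  obtain ⟨a, b, c, hab, hac, hbc, -⟩ := is3Clique_iff.1 hs
  rw [cycleGraph_adj] at hab hac hbc
  -- `a - c = (a - b) + (b - c)` with all three differences `±1` forces `1 = 0` (impossible) or `3 = 0`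
  grind

open Fin.CommRing in
theorem card_cliqueFinset_two_cycleGraph {n : ℕ} (hn : 3 ≤ n) :
    #((cycleGraph n).cliqueFinset 2) = n := by
  obtain ⟨m, rfl⟩ := Nat.exists_eq_add_of_le' hn
  have h2 : (2 : Fin (m + 3)) ≠ 0 := by simp [Fin.ext_iff, Nat.mod_eq_of_lt]
  have himage : (cycleGraph (m + 3)).cliqueFinset 2 = univ.image fun i => {i, i + 1} := by
    ext s
    simp only [mem_cliqueFinset_iff, isNClique_iff, card_eq_two, mem_image, mem_univ, true_and]
    constructor
    · rintro ⟨hs, x, y, hxy, rfl⟩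
      rw [coe_pair, isClique_pair] at hs
      rcases cycleGraph_adj.1 (hs hxy) with h | h
      · obtain rfl : x = y + 1 := sub_eq_iff_eq_add'.1 h
        exact ⟨y, pair_comm _ _⟩
      · obtain rfl : y = x + 1 := sub_eq_iff_eq_add'.1 h
        exact ⟨x, rfl⟩
    · rintro ⟨a, rfl⟩
      refine ⟨?_, a, a + 1, by simp, rfl⟩
      rw [coe_pair, isClique_pair, cycleGraph_adj]
      simp
  rw [himage, card_image_of_injective, card_univ, Fintype.card_fin]
  intro i j (hij : ({i, i + 1} : Finset _) = {j, j + 1})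
  have hi : i ∈ ({j, j + 1} : Finset _) := hij ▸ by simp
  have hi' : i + 1 ∈ ({j, j + 1} : Finset _) := hij ▸ by simp
  simp only [mem_insert, mem_singleton] at hi hi'
  grind

end SimpleGraph

open SimpleGraph

section

variable {V : Type*} [Fintype V]

theorem curvature_eq_sum_cliques (G : SimpleGraph V) (x : V) :
    curvature G x = ∑ s ∈ G.cliques with x ∈ s, (-1 : ℚ) ^ (s.card + 1) / s.card := by
  rw [curvature, powerset_univ]
  congr 1
  ext
  simp [and_comm]

theorem eulerChar_eq_sum_cliques (G : SimpleGraph V) :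
    eulerChar G = ∑ s ∈ G.cliques with s.Nonempty, (-1 : ℤ) ^ (s.card + 1) := by
  rw [eulerChar, powerset_univ]
  congr 1
  ext
  simp [and_comm]

theorem sum_curvature_eq_eulerChar (G : SimpleGraph V) :
    ∑ x, curvature G x = eulerChar G := by
  simp_rw [curvature_eq_sum_cliques, sum_sum_filter_mem, eulerChar_eq_sum_cliques, sum_filter]
  push_cast
  refine sum_congr rfl fun s _ => ?_
  rcases s.eq_empty_or_nonempty with rfl | hs
  · simp
  · rw [if_pos hs, nsmul_eq_mul]
    field_simp [hs.card_pos.ne']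

theorem curvature_eq_of_iso_cycleGraph (G : SimpleGraph V) (x : V) {n : ℕ} (hn : 4 ≤ n)
    (e : G.induce (G.neighborSet x) ≃g cycleGraph n) :
    curvature G x = 1 - n / 6 := by
  set w : ℕ → ℚ := fun k => (-1) ^ (k + 1) / k
  have hcycle := sum_cliques_of_cliqueFree_three (cycleGraph_cliqueFree_three hn)
    fun k => w (k + 1)
  calc curvature G x
      = ∑ s ∈ G.cliques with x ∈ s, w s.card := curvature_eq_sum_cliques G x
    _ = ∑ t ∈ G.cliques with ↑t ⊆ G.neighborSet x, w (t.card + 1) :=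
      sum_cliques_mem_eq_sum_cliques_subset_neighborSet G x w
    _ = ∑ u ∈ (cycleGraph n).cliques, w (u.card + 1) :=
      (sum_cliques_subset_eq_sum_cliques_induce G _ fun k => w (k + 1)).trans (e.sum_cliques fun k => w (k + 1))
    _ = 1 - n / 6 := by
      rw [hcycle, Fintype.card_fin, card_cliqueFinset_two_cycleGraph (by omega)]
      norm_num [w]
      ring

end

/-- Gauss–Bonnet for two-dimensional geometric graphs: if every unit sphere `S(x)`
(the subgraph induced on the neighbors of `x`) is isomorphic to the cycle graph of
length `d(x) ≥ 4`, then the curvature at every vertex is `1 − d(x)/6` and these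
curvatures sum to the Euler characteristic. -/
theorem gauss_bonnet_two_dimensional {V : Type*} [Fintype V] (G : SimpleGraph V)
    (hgeom : ∀ x : V, 4 ≤ G.degree x ∧
      Nonempty ((G.induce (G.neighborSet x)) ≃g SimpleGraph.cycleGraph (G.degree x))) :
    (∀ x : V, curvature G x = 1 - (G.degree x : ℚ) / 6) ∧
    ∑ x : V, (1 - (G.degree x : ℚ) / 6) = (eulerChar G : ℚ) := by
  have hcurvature (x : V) : curvature G x = 1 - (G.degree x : ℚ) / 6 :=
    curvature_eq_of_iso_cycleGraph G x (hgeom x).1 (hgeom x).2.some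
  refine ⟨hcurvature, ?_⟩
  simp_rw [← hcurvature]
  exact_mod_cast sum_curvature_eq_eulerChar G
end

section
/- Vanishing curvature in three dimensions: let G=(V,E) be a finite simple graph and x a vertex such that the unit sphere S(x) (the subgraph induced on the neighbors of x) satisfies: χ(S(x)) = 2, S(x) contains no clique on 4 vertices, and every edge of S(x) is contained in exactly two triangles of S(x). Then the curvature at x vanishes: K(x) = 0. -/
open Classical Finset

/-- The unit sphere of `G` at `x`: the subgraph induced on the neighbors of `x`. -/
def unitSphere {V : Type*} (G : SimpleGraph V) (x : V) : SimpleGraph (G.neighborSet x) :=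
  G.induce (G.neighborSet x)

section Aux

set_option linter.unusedSectionVars false

variable {V : Type*} [Fintype V] (G : SimpleGraph V) (x : V)

lemma sphereAdj_iff (a b : G.neighborSet x) :
    (unitSphere G x).Adj a b ↔ G.Adj a.1 b.1 := by
  simp [unitSphere]

lemma clique_map {s : Finset (G.neighborSet x)}
    (hs : (unitSphere G x).IsClique (s : Set (G.neighborSet x))) :
    G.IsClique ((s.map (Function.Embedding.subtype _) : Finset V) : Set V) := by
  intro a ha b hb hab
  simp only [Finset.coe_map, Set.mem_image, Function.Embedding.coe_subtype] at ha hb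
  obtain ⟨a', ha', rfl⟩ := ha
  obtain ⟨b', hb', rfl⟩ := hb
  have hne : a' ≠ b' := fun h => hab (by rw [h])
  have := hs ha' hb' hne
  rwa [sphereAdj_iff] at this

lemma clique_subtype {t : Finset V} (ht : G.IsClique (t : Set V)) :
    (unitSphere G x).IsClique
      ((t.subtype (· ∈ G.neighborSet x) : Finset (G.neighborSet x)) : Set (G.neighborSet x)) := by
  intro a ha b hb hab
  simp only [Finset.mem_coe, Finset.mem_subtype] at ha hb
  rw [sphereAdj_iff]
  exact ht ha hb (fun h => hab (Subtype.ext h))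

lemma curv_eq :
    curvature G x = ∑ t ∈ (G.neighborFinset x).powerset.filter
      (fun t : Finset V => G.IsClique (t : Set V)),
      (-1 : ℚ) ^ t.card / (t.card + 1 : ℚ) := by
  rw [curvature]
  refine Finset.sum_nbij' (fun s => s.erase x) (fun t => insert x t) ?_ ?_ ?_ ?_ ?_
  · intro s hs
    simp only [mem_filter, mem_powerset] at hs ⊢
    obtain ⟨-, hxs, hcl⟩ := hs
    refine ⟨?_, hcl.subset (by simp [Finset.erase_subset])⟩
    intro y hy
    rw [Finset.mem_erase] at hy
    rw [SimpleGraph.mem_neighborFinset]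
    exact (hcl (Finset.mem_coe.2 hy.2) (Finset.mem_coe.2 hxs) hy.1).symm
  · intro t ht
    simp only [mem_filter, mem_powerset] at ht ⊢
    obtain ⟨hsub, hcl⟩ := ht
    refine ⟨Finset.subset_univ _, Finset.mem_insert_self _ _, ?_⟩
    rw [Finset.coe_insert]
    refine hcl.insert ?_
    intro b hb _
    exact (SimpleGraph.mem_neighborFinset G x b).1 (hsub (Finset.mem_coe.1 hb))
  · intro s hs
    simp only [mem_filter] at hs
    exact Finset.insert_erase hs.2.1
  · intro t ht
    simp only [mem_filter, mem_powerset] at ht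
    refine Finset.erase_insert ?_
    intro hx
    exact G.irrefl ((SimpleGraph.mem_neighborFinset G x x).1 (ht.1 hx))
  · intro s hs
    simp only [mem_filter] at hs
    have h1 : (s.erase x).card + 1 = s.card := Finset.card_erase_add_one hs.2.1
    rw [← h1]
    push_cast
    rw [pow_succ]
    ring

lemma euler_eq :
    eulerChar (unitSphere G x) = ∑ t ∈ ((G.neighborFinset x).powerset.filter
      (fun t : Finset V => G.IsClique (t : Set V))).filter (fun t => t.Nonempty),
      (-1 : ℤ) ^ (t.card + 1) := by
  rw [eulerChar]
  refine Finset.sum_nbij' (fun s => s.map (Function.Embedding.subtype _))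
    (fun t => t.subtype (· ∈ G.neighborSet x)) ?_ ?_ ?_ ?_ ?_
  · intro s hs
    simp only [mem_filter, mem_powerset] at hs ⊢
    obtain ⟨-, hne, hcl⟩ := hs
    refine ⟨⟨?_, clique_map G x hcl⟩, Finset.map_nonempty.2 hne⟩
    intro y hy
    simp only [Finset.mem_map, Function.Embedding.coe_subtype] at hy
    obtain ⟨a, _, rfl⟩ := hy
    exact (SimpleGraph.mem_neighborFinset G x _).2 a.2
  · intro t ht
    simp only [mem_filter, mem_powerset] at ht ⊢
    obtain ⟨⟨hsub, hcl⟩, hne⟩ := ht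
    refine ⟨Finset.subset_univ _, ?_, clique_subtype G x hcl⟩
    obtain ⟨a, ha⟩ := hne
    exact ⟨⟨a, (SimpleGraph.mem_neighborSet G x a).2
      ((SimpleGraph.mem_neighborFinset G x a).1 (hsub ha))⟩, Finset.mem_subtype.2 ha⟩
  · intro s hs
    ext a
    simp only [Finset.mem_subtype, Finset.mem_map, Function.Embedding.coe_subtype]
    constructor
    · rintro ⟨b, hb, hba⟩
      rwa [← Subtype.ext hba]
    · intro ha
      exact ⟨a, ha, rfl⟩
  · intro t ht
    simp only [mem_filter, mem_powerset] at ht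
    show (Finset.subtype _ t).map (Function.Embedding.subtype _) = t
    rw [Finset.subtype_map]
    exact Finset.filter_true_of_mem (fun a ha =>
      (SimpleGraph.mem_neighborSet G x a).2 ((SimpleGraph.mem_neighborFinset G x a).1 (ht.1.1 ha)))
  · intro s hs
    rw [Finset.card_map]

lemma card_le_three (hK4 : (unitSphere G x).CliqueFree 4) {t : Finset V}
    (hsub : t ⊆ G.neighborFinset x) (hcl : G.IsClique (t : Set V)) : t.card ≤ 3 := by
  by_contra h
  push_neg at h
  obtain ⟨u, hut, hcard⟩ := Finset.exists_subset_card_eq (show 4 ≤ t.card by omega)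
  have husub : u ⊆ G.neighborFinset x := hut.trans hsub
  have hucl : G.IsClique (u : Set V) := hcl.subset (Finset.coe_subset.2 hut)
  refine hK4 (u.subtype (· ∈ G.neighborSet x)) ?_
  constructor
  · exact clique_subtype G x hucl
  · rw [Finset.card_subtype, Finset.filter_true_of_mem, hcard]
    intro a ha
    exact (SimpleGraph.mem_neighborSet G x a).2
      ((SimpleGraph.mem_neighborFinset G x a).1 (husub ha))

end Aux

/-- Vanishing curvature in three dimensions: if the unit sphere `S(x)` has Euler
characteristic `2`, contains no clique on `4` vertices, and every edge of `S(x)` is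
contained in exactly two triangles of `S(x)`, then `K(x) = 0`. -/
theorem curvature_vanishes_three_dimensional {V : Type*} [Fintype V] (G : SimpleGraph V)
    (x : V)
    (hchi : eulerChar (unitSphere G x) = 2)
    (hK4 : (unitSphere G x).CliqueFree 4)
    (htri : ∀ a b : G.neighborSet x, (unitSphere G x).Adj a b →
      (Finset.univ.filter
        (fun c : G.neighborSet x =>
          (unitSphere G x).Adj a c ∧ (unitSphere G x).Adj b c)).card = 2) :
    curvature G x = 0 := by
  classical
  set B := (G.neighborFinset x).powerset.filter
      (fun t : Finset V => G.IsClique (t : Set V)) with hBdef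
  have hmemB : ∀ t : Finset V, t ∈ B ↔ t ⊆ G.neighborFinset x ∧ G.IsClique (t : Set V) := by
    intro t; simp [hBdef]
  have hble : ∀ t ∈ B, t.card ≤ 3 := fun t ht =>
    card_le_three G x hK4 ((hmemB t).1 ht).1 ((hmemB t).1 ht).2
  set n : ℕ → ℕ := fun k => (B.filter (fun t => t.card = k)).card with hn
  -- n 0 = 1
  have hn0 : n 0 = 1 := by
    have h : B.filter (fun t => t.card = 0) = {∅} := by
      ext t
      simp only [mem_filter, Finset.mem_singleton, Finset.card_eq_zero, hmemB]
      constructor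
      · rintro ⟨-, rfl⟩; rfl
      · rintro rfl
        exact ⟨⟨Finset.empty_subset _, by simp⟩, rfl⟩
    show (B.filter (fun t => t.card = 0)).card = 1
    rw [h, Finset.card_singleton]
  -- curvature fiberwise
  have hmap : ∀ t ∈ B, t.card ∈ Finset.range 4 :=
    fun t ht => Finset.mem_range.2 (Nat.lt_succ_of_le (hble t ht))
  have hcurv2 : curvature G x
      = ∑ k ∈ Finset.range 4, (n k : ℚ) * ((-1) ^ k / (k + 1 : ℚ)) := by
    rw [curv_eq, ← Finset.sum_fiberwise_of_maps_to hmap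
      (fun t : Finset V => (-1 : ℚ) ^ t.card / (t.card + 1 : ℚ))]
    refine Finset.sum_congr rfl fun k _ => ?_
    have hc : ∀ t ∈ B.filter (fun t => t.card = k),
        (-1 : ℚ) ^ t.card / (t.card + 1 : ℚ) = (-1) ^ k / (k + 1 : ℚ) := by
      intro t ht
      rw [(Finset.mem_filter.1 ht).2]
    rw [Finset.sum_congr rfl hc, Finset.sum_const, nsmul_eq_mul]
  -- euler fiberwise
  have hmap' : ∀ t ∈ B.filter (fun t => t.Nonempty), t.card ∈ Finset.range 4 :=
    fun t ht => hmap t (Finset.mem_filter.1 ht).1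
  have hfib : ∀ k : ℕ, k ≠ 0 →
      (B.filter (fun t => t.Nonempty)).filter (fun t => t.card = k)
        = B.filter (fun t => t.card = k) := by
    intro k hk
    ext t
    simp only [mem_filter, and_assoc]
    constructor
    · rintro ⟨h1, -, h3⟩; exact ⟨h1, h3⟩
    · rintro ⟨h1, h3⟩
      refine ⟨h1, ?_, h3⟩
      rw [← Finset.card_pos, h3]
      omega
  have hfib0 : (B.filter (fun t => t.Nonempty)).filter (fun t => t.card = 0) = ∅ := by
    refine Finset.filter_false_of_mem ?_
    intro t ht
    have := (Finset.mem_filter.1 ht).2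
    rw [← Finset.card_pos] at this
    omega
  have heuler2 : ∑ k ∈ Finset.range 4,
      ∑ t ∈ (B.filter (fun t => t.Nonempty)).filter (fun t => t.card = k),
        (-1 : ℤ) ^ (t.card + 1) = 2 := by
    rw [Finset.sum_fiberwise_of_maps_to hmap'
      (fun t : Finset V => (-1 : ℤ) ^ (t.card + 1)), ← euler_eq, hchi]
  have hinner : ∀ k : ℕ,
      ∑ t ∈ (B.filter (fun t => t.Nonempty)).filter (fun t => t.card = k),
        (-1 : ℤ) ^ (t.card + 1)
      = ((B.filter (fun t => t.Nonempty)).filter (fun t => t.card = k)).card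
          • (-1 : ℤ) ^ (k + 1) := by
    intro k
    rw [Finset.sum_congr rfl (fun t ht => by rw [(Finset.mem_filter.1 ht).2]),
      Finset.sum_const]
  rw [Finset.sum_congr rfl (fun k _ => hinner k)] at heuler2
  rw [Finset.sum_range_succ, Finset.sum_range_succ, Finset.sum_range_succ,
    Finset.sum_range_one, hfib0, hfib 1 one_ne_zero, hfib 2 two_ne_zero,
    hfib 3 three_ne_zero] at heuler2
  simp only [Finset.card_empty, zero_smul, zero_add, nsmul_eq_mul] at heuler2
  have hchi2 : (n 1 : ℤ) * (-1) ^ 2 + (n 2 : ℤ) * (-1) ^ 3 + (n 3 : ℤ) * (-1) ^ 4 = 2 :=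
    heuler2
  -- double counting: 3 * n 3 = 2 * n 2
  have hcount : 3 * n 3 = 2 * n 2 := by
    have key : ∑ e ∈ B.filter (fun t => t.card = 2),
          ((B.filter (fun t => t.card = 3)).filter (fun t => e ⊆ t)).card
        = ∑ t ∈ B.filter (fun t => t.card = 3),
          ((B.filter (fun t => t.card = 2)).filter (fun e => e ⊆ t)).card := by
      simp_rw [Finset.card_filter]
      exact Finset.sum_comm
    have h2 : ∀ t ∈ B.filter (fun t => t.card = 3),
        ((B.filter (fun t => t.card = 2)).filter (fun e => e ⊆ t)).card = 3 := by
      intro t ht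
      obtain ⟨htB, htc⟩ := Finset.mem_filter.1 ht
      obtain ⟨htsub, htcl⟩ := (hmemB t).1 htB
      have hpe : (B.filter (fun t => t.card = 2)).filter (fun e => e ⊆ t)
          = t.powersetCard 2 := by
        ext e
        simp only [mem_filter, Finset.mem_powersetCard, hmemB]
        constructor
        · rintro ⟨⟨-, h2⟩, h3⟩; exact ⟨h3, h2⟩
        · rintro ⟨h3, h2⟩
          exact ⟨⟨⟨h3.trans htsub, htcl.subset (Finset.coe_subset.2 h3)⟩, h2⟩, h3⟩
      rw [hpe, Finset.card_powersetCard, htc]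
      decide
    have h1 : ∀ e ∈ B.filter (fun t => t.card = 2),
        ((B.filter (fun t => t.card = 3)).filter (fun t => e ⊆ t)).card = 2 := by
      intro e he
      obtain ⟨heB, hec⟩ := Finset.mem_filter.1 he
      obtain ⟨hesub, hecl⟩ := (hmemB e).1 heB
      obtain ⟨a, b, hab, rfl⟩ := Finset.card_eq_two.1 hec
      have haN : a ∈ G.neighborSet x := (SimpleGraph.mem_neighborFinset G x a).1
        (hesub (by simp))
      have hbN : b ∈ G.neighborSet x := (SimpleGraph.mem_neighborFinset G x b).1
        (hesub (by simp))
      set a' : G.neighborSet x := ⟨a, haN⟩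
      set b' : G.neighborSet x := ⟨b, hbN⟩
      have hadj : G.Adj a b := hecl (by simp) (by simp) hab
      have hS : (unitSphere G x).Adj a' b' := (sphereAdj_iff G x a' b').2 hadj
      rw [← htri a' b' hS]
      refine (Finset.card_bij (fun c _ => insert c.1 ({a, b} : Finset V)) ?_ ?_ ?_).symm
      · intro c hc
        obtain ⟨hca, hcb⟩ := (Finset.mem_filter.1 hc).2
        rw [sphereAdj_iff] at hca hcb
        have hcnot : c.1 ∉ ({a, b} : Finset V) := by
          simp only [Finset.mem_insert, Finset.mem_singleton]
          push_neg
          exact ⟨hca.ne', hcb.ne'⟩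
        refine Finset.mem_filter.2 ⟨Finset.mem_filter.2 ⟨(hmemB _).2 ⟨?_, ?_⟩, ?_⟩,
          Finset.subset_insert _ _⟩
        · intro y hy
          rcases Finset.mem_insert.1 hy with rfl | hy
          · exact (SimpleGraph.mem_neighborFinset G x _).2 c.2
          · exact hesub hy
        · rw [Finset.coe_insert]
          refine hecl.insert ?_
          intro y hy hne
          rcases Finset.mem_insert.1 hy with rfl | hy
          · exact hca.symm
          · rw [Finset.mem_singleton] at hy; subst hy
            exact hcb.symm
        · rw [Finset.card_insert_of_notMem hcnot, hec]
      · intro c₁ h₁ c₂ h₂ heq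
        obtain ⟨h1a, h1b⟩ := (Finset.mem_filter.1 h₁).2
        obtain ⟨h2a, h2b⟩ := (Finset.mem_filter.1 h₂).2
        rw [sphereAdj_iff] at h1a h1b h2a h2b
        have heq' : insert c₁.1 ({a, b} : Finset V) = insert c₂.1 ({a, b} : Finset V) := heq
        have : c₁.1 ∈ insert c₂.1 ({a, b} : Finset V) := by
          rw [← heq']; exact Finset.mem_insert_self _ _
        rcases Finset.mem_insert.1 this with h | h
        · exact Subtype.ext h
        · simp only [Finset.mem_insert, Finset.mem_singleton] at h
          rcases h with rfl | rfl
          · exact absurd rfl h1a.ne'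
          · exact absurd rfl h1b.ne'
      · intro t ht
        obtain ⟨htB', hsub⟩ := Finset.mem_filter.1 ht
        obtain ⟨htB, htc⟩ := Finset.mem_filter.1 htB'
        obtain ⟨htsub, htcl⟩ := (hmemB t).1 htB
        have hsd : (t \ ({a, b} : Finset V)).card = 1 := by
          rw [Finset.card_sdiff_of_subset hsub, htc, hec]
        obtain ⟨c, hc⟩ := Finset.card_eq_one.1 hsd
        have hcmem : c ∈ t ∧ c ∉ ({a, b} : Finset V) := by
          have : c ∈ t \ ({a, b} : Finset V) := by rw [hc]; exact Finset.mem_singleton_self c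
          exact Finset.mem_sdiff.1 this
        have hcN : c ∈ G.neighborSet x := (SimpleGraph.mem_neighborFinset G x c).1
          (htsub hcmem.1)
        have hcna : c ≠ a := fun h => hcmem.2 (by rw [h]; simp)
        have hcnb : c ≠ b := fun h => hcmem.2 (by rw [h]; simp)
        have hac : G.Adj a c := htcl (Finset.mem_coe.2 (hsub (by simp)))
          (Finset.mem_coe.2 hcmem.1) (Ne.symm hcna)
        have hbc : G.Adj b c := htcl (Finset.mem_coe.2 (hsub (by simp)))
          (Finset.mem_coe.2 hcmem.1) (Ne.symm hcnb)
        refine ⟨⟨c, hcN⟩, Finset.mem_filter.2 ⟨Finset.mem_univ _, ?_, ?_⟩, ?_⟩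
        · exact (sphereAdj_iff G x a' ⟨c, hcN⟩).2 hac
        · exact (sphereAdj_iff G x b' ⟨c, hcN⟩).2 hbc
        · have hsubset : insert c ({a, b} : Finset V) ⊆ t := by
            intro y hy
            rcases Finset.mem_insert.1 hy with rfl | hy
            · exact hcmem.1
            · exact hsub hy
          refine Finset.eq_of_subset_of_card_le hsubset ?_
          rw [Finset.card_insert_of_notMem hcmem.2, hec, htc]
    rw [Finset.sum_congr rfl h1, Finset.sum_congr rfl h2,
      Finset.sum_const, Finset.sum_const, smul_eq_mul, smul_eq_mul] at key
    have key2 : n 2 * 2 = n 3 * 3 := key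
    omega
  -- assemble
  have hZ : (n 1 : ℤ) - (n 2 : ℤ) + (n 3 : ℤ) = 2 := by
    norm_num at hchi2
    linarith [hchi2]
  have c1 : (n 1 : ℚ) - (n 2 : ℚ) + (n 3 : ℚ) = 2 := by exact_mod_cast hZ
  have c2 : 3 * (n 3 : ℚ) = 2 * (n 2 : ℚ) := by exact_mod_cast hcount
  rw [hcurv2, Finset.sum_range_succ, Finset.sum_range_succ, Finset.sum_range_succ,
    Finset.sum_range_one, hn0]
  norm_num
  linarith [c1, c2]
end

section
/- Odd-dimensional Euler characteristic vanishes: let G=(V,E) be a finite simple graph such that for every vertex x the unit sphere S(x) (the subgraph induced on the neighbors of x) satisfies: χ(S(x)) = 2, S(x) contains no clique on 4 vertices, and every edge of S(x) is contained in exactly two triangles of S(x). Then χ(G) = 0. -/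
open Classical Finset

noncomputable def cfin {W : Type*} [Fintype W] (H : SimpleGraph W) (k : ℕ) : Finset (Finset W) :=
  Finset.univ.powerset.filter (fun s : Finset W => s.card = k ∧ H.IsClique (s : Set W))

lemma mem_cfin {W : Type*} [Fintype W] {H : SimpleGraph W} {k : ℕ} {s : Finset W} :
    s ∈ cfin H k ↔ s.card = k ∧ H.IsClique (s : Set W) := by
  simp [cfin]

lemma eulerChar_eq {W : Type*} [Fintype W] (H : SimpleGraph W)
    (hb : ∀ s : Finset W, H.IsClique (s : Set W) → s.card ≤ 4) :
    eulerChar H = ((cfin H 1).card : ℤ) - (cfin H 2).card + (cfin H 3).card - (cfin H 4).card := by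
  classical
  have hmaps : ∀ s ∈ Finset.univ.powerset.filter
      (fun s : Finset W => s.Nonempty ∧ H.IsClique (s : Set W)), s.card ∈ Finset.Icc 1 4 := by
    intro s hs
    simp only [mem_filter] at hs
    exact Finset.mem_Icc.2 ⟨Finset.card_pos.2 hs.2.1, hb s hs.2.2⟩
  have hsum := Finset.sum_fiberwise_of_maps_to hmaps (fun s => (-1:ℤ)^(s.card+1))
  have hfib : ∀ k : ℕ, 1 ≤ k →
      (Finset.univ.powerset.filter
        (fun s : Finset W => s.Nonempty ∧ H.IsClique (s : Set W))).filter
        (fun s => s.card = k) = cfin H k := by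
    intro k hk
    ext s
    simp only [cfin, mem_filter, mem_powerset, subset_univ, true_and]
    constructor
    · rintro ⟨⟨hne, hcl⟩, hcard⟩; exact ⟨hcard, hcl⟩
    · rintro ⟨hcard, hcl⟩
      exact ⟨⟨Finset.card_pos.1 (hcard ▸ hk), hcl⟩, hcard⟩
  have hinner : ∀ k : ℕ, 1 ≤ k →
      ∑ s ∈ cfin H k, (-1:ℤ)^(s.card+1) = ((cfin H k).card : ℤ) * (-1:ℤ)^(k+1) := by
    intro k hk
    rw [Finset.sum_congr rfl (fun s hs => by rw [(mem_cfin.1 hs).1] : ∀ s ∈ cfin H k,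
      (-1:ℤ)^(s.card+1) = (-1:ℤ)^(k+1)), Finset.sum_const, nsmul_eq_mul]
  rw [eulerChar, ← hsum]
  rw [show (Finset.Icc 1 4 : Finset ℕ) = {1, 2, 3, 4} from by decide]
  rw [Finset.sum_insert (by decide), Finset.sum_insert (by decide),
    Finset.sum_insert (by decide), Finset.sum_singleton]
  rw [hfib 1 (by norm_num), hfib 2 (by norm_num), hfib 3 (by norm_num), hfib 4 (by norm_num)]
  rw [hinner 1 (by norm_num), hinner 2 (by norm_num), hinner 3 (by norm_num), hinner 4 (by norm_num)]
  ring

lemma unitSphere_adj {V : Type*} {G : SimpleGraph V} {x : V} {a b : ↥(G.neighborSet x)} :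
    (unitSphere G x).Adj a b ↔ G.Adj ↑a ↑b := by
  simp [unitSphere]

lemma sphere_clique_card {V : Type*} [Fintype V] (G : SimpleGraph V) (x : V) (k : ℕ) :
    (cfin (unitSphere G x) k).card = ((cfin G (k+1)).filter (fun t => x ∈ t)).card := by
  classical
  have hxmap : ∀ s : Finset ↥(G.neighborSet x),
      x ∉ s.map (Function.Embedding.subtype _) := by
    intro s h
    rw [Finset.mem_map] at h
    obtain ⟨a, _, ha⟩ := h
    have h2 := a.2
    simp only [Function.Embedding.coe_subtype] at ha
    rw [ha] at h2
    exact G.irrefl ((SimpleGraph.mem_neighborSet _ _ _).1 h2)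
  refine Finset.card_bij (fun s _ => insert x (s.map (Function.Embedding.subtype _))) ?_ ?_ ?_
  · intro s hs
    obtain ⟨hcard, hcl⟩ := mem_cfin.1 hs
    have hmem : ∀ v ∈ s.map (Function.Embedding.subtype _), G.Adj x v := by
      intro v hv
      rw [Finset.mem_map] at hv
      obtain ⟨a, _, ha⟩ := hv
      have h2 := a.2
      simp only [Function.Embedding.coe_subtype] at ha
      rw [ha] at h2
      exact (SimpleGraph.mem_neighborSet _ _ _).1 h2
    rw [Finset.mem_filter, mem_cfin]
    refine ⟨⟨?_, ?_⟩, Finset.mem_insert_self _ _⟩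
    · rw [Finset.card_insert_of_notMem (hxmap s), Finset.card_map, hcard]
    · rw [Finset.coe_insert, SimpleGraph.isClique_insert_of_notMem (by simpa using hxmap s)]
      constructor
      · intro u hu v hv huv
        simp only [Finset.coe_map, Set.mem_image, Finset.mem_coe,
          Function.Embedding.coe_subtype] at hu hv
        obtain ⟨a, ha, rfl⟩ := hu; obtain ⟨b, hb, rfl⟩ := hv
        exact unitSphere_adj.1 (hcl ha hb (fun h => huv (by rw [h])))
      · intro v hv
        exact hmem v (by simpa using hv)
  · intro s1 h1 s2 h2 heq
    have : s1.map (Function.Embedding.subtype _) = s2.map (Function.Embedding.subtype _) := by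
      have := congrArg (fun t => Finset.erase t x) heq
      simpa [Finset.erase_insert (hxmap s1), Finset.erase_insert (hxmap s2)] using this
    exact Finset.map_injective _ this
  · intro t ht
    rw [Finset.mem_filter] at ht
    obtain ⟨htc, hxt⟩ := ht
    obtain ⟨hcard, hcl⟩ := mem_cfin.1 htc
    have hsub : ∀ v ∈ t.erase x, v ∈ G.neighborSet x := by
      intro v hv
      rw [Finset.mem_erase] at hv
      exact SimpleGraph.mem_neighborSet _ _ _ |>.2
        (hcl (by exact_mod_cast hxt) (by exact_mod_cast hv.2) (Ne.symm hv.1))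
    refine ⟨(t.erase x).subtype (fun v => v ∈ G.neighborSet x), ?_, ?_⟩
    · rw [mem_cfin]
      constructor
      · rw [Finset.card_subtype, Finset.filter_true_of_mem hsub,
          Finset.card_erase_of_mem hxt, hcard]
        omega
      · intro a ha b hb hab
        rw [Finset.mem_coe, Finset.mem_subtype] at ha hb
        rw [unitSphere_adj]
        exact hcl (by exact_mod_cast (Finset.mem_erase.1 ha).2)
          (by exact_mod_cast (Finset.mem_erase.1 hb).2) (fun h => hab (Subtype.ext h))
    · show insert x (((t.erase x).subtype (fun v => v ∈ G.neighborSet x)).map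
          (Function.Embedding.subtype _)) = t
      rw [Finset.subtype_map, Finset.filter_true_of_mem hsub, Finset.insert_erase hxt]

lemma sum_mem_count {V : Type*} [Fintype V] (B : Finset (Finset V)) :
    ∑ x : V, (B.filter (fun t => x ∈ t)).card = ∑ t ∈ B, t.card := by
  classical
  simp only [Finset.card_filter]
  rw [Finset.sum_comm]
  refine Finset.sum_congr rfl fun t ht => ?_
  rw [← Finset.card_filter]
  simp

set_option maxHeartbeats 1000000 in
lemma two_three {W : Type*} [Fintype W] (H : SimpleGraph W)
    (hedge : ∀ a b : W, H.Adj a b →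
      (Finset.univ.filter (fun c => H.Adj a c ∧ H.Adj b c)).card = 2) :
    2 * (cfin H 2).card = 3 * (cfin H 3).card := by
  classical
  have h1 : ∀ e ∈ cfin H 2, ((cfin H 3).filter (fun t => e ⊆ t)).card = 2 := by
    intro e he
    obtain ⟨hcard, hcl⟩ := mem_cfin.1 he
    obtain ⟨a, b, hne, rfl⟩ := Finset.card_eq_two.1 hcard
    have hab : H.Adj a b := hcl (by simp) (by simp) hne
    rw [← hedge a b hab]
    refine (Finset.card_bij (fun c _ => insert c {a, b}) ?_ ?_ ?_).symm
    · intro c hc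
      rw [Finset.mem_filter] at hc
      obtain ⟨-, hac, hbc⟩ := hc
      have hcne : c ∉ ({a, b} : Finset W) := by
        simp only [Finset.mem_insert, Finset.mem_singleton]
        push_neg
        exact ⟨fun h => H.irrefl (h ▸ hac), fun h => H.irrefl (h ▸ hbc)⟩
      rw [Finset.mem_filter, mem_cfin]
      refine ⟨⟨?_, ?_⟩, Finset.subset_insert _ _⟩
      · rw [Finset.card_insert_of_notMem hcne, hcard]
      · rw [Finset.coe_insert, SimpleGraph.isClique_insert_of_notMem (by simpa using hcne)]
        refine ⟨hcl, ?_⟩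
        intro v hv
        simp only [Finset.coe_insert, Set.mem_insert_iff, Finset.coe_singleton,
          Set.mem_singleton_iff] at hv
        rcases hv with rfl | rfl
        · exact hac.symm
        · exact hbc.symm
    · intro c1 hc1 c2 hc2 heq
      rw [Finset.mem_filter] at hc1 hc2
      have h1ne : c1 ∉ ({a, b} : Finset W) := by
        simp only [Finset.mem_insert, Finset.mem_singleton]
        push_neg
        exact ⟨fun h => H.irrefl (h ▸ hc1.2.1), fun h => H.irrefl (h ▸ hc1.2.2)⟩
      have heq' : insert c1 ({a, b} : Finset W) = insert c2 {a, b} := heq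
      have : c1 ∈ insert c2 ({a, b} : Finset W) := by
        rw [← heq']; exact Finset.mem_insert_self _ _
      rcases Finset.mem_insert.1 this with h | h
      · exact h
      · exact absurd h h1ne
    · intro t ht
      rw [Finset.mem_filter] at ht
      obtain ⟨htc, hsub⟩ := ht
      obtain ⟨htcard, htcl⟩ := mem_cfin.1 htc
      have hd : (t \ ({a, b} : Finset W)).card = 1 := by
        rw [Finset.card_sdiff_of_subset hsub, htcard, hcard]
      obtain ⟨c, hc⟩ := Finset.card_eq_one.1 hd
      have hct : c ∈ t ∧ c ∉ ({a, b} : Finset W) := by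
        have : c ∈ t \ ({a, b} : Finset W) := hc ▸ Finset.mem_singleton_self c
        exact ⟨(Finset.mem_sdiff.1 this).1, (Finset.mem_sdiff.1 this).2⟩
      have hca : c ≠ a := fun h => hct.2 (by simp [h])
      have hcb : c ≠ b := fun h => hct.2 (by simp [h])
      refine ⟨c, ?_, ?_⟩
      · rw [Finset.mem_filter]
        exact ⟨Finset.mem_univ _,
          htcl (by exact_mod_cast hsub (by simp)) (by exact_mod_cast hct.1) hca.symm,
          htcl (by exact_mod_cast hsub (by simp)) (by exact_mod_cast hct.1) hcb.symm⟩
      · show insert c ({a, b} : Finset W) = t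
        rw [Finset.insert_eq, ← hc, Finset.sdiff_union_of_subset hsub]
  have h2 : ∀ t ∈ cfin H 3, ((cfin H 2).filter (fun e => e ⊆ t)).card = 3 := by
    intro t ht
    obtain ⟨htcard, htcl⟩ := mem_cfin.1 ht
    have : (cfin H 2).filter (fun e => e ⊆ t) = Finset.powersetCard 2 t := by
      ext e
      rw [Finset.mem_filter, mem_cfin, Finset.mem_powersetCard]
      constructor
      · rintro ⟨⟨hc, -⟩, hsub⟩; exact ⟨hsub, hc⟩
      · rintro ⟨hsub, hc⟩
        exact ⟨⟨hc, htcl.subset (by exact_mod_cast hsub)⟩, hsub⟩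
    rw [this, Finset.card_powersetCard, htcard]
    norm_num
  have e1 : 2 * (cfin H 2).card = ∑ e ∈ cfin H 2, ((cfin H 3).filter (fun t => e ⊆ t)).card := by
    rw [Finset.sum_congr rfl h1, Finset.sum_const, smul_eq_mul, mul_comm]
  have e2 : ∑ e ∈ cfin H 2, ((cfin H 3).filter (fun t => e ⊆ t)).card
      = ∑ t ∈ cfin H 3, ((cfin H 2).filter (fun e => e ⊆ t)).card := by
    simp only [Finset.card_filter]
    exact Finset.sum_comm
  have e3 : ∑ t ∈ cfin H 3, ((cfin H 2).filter (fun e => e ⊆ t)).card = 3 * (cfin H 3).card := by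
    rw [Finset.sum_congr rfl h2, Finset.sum_const, smul_eq_mul, mul_comm]
  omega


lemma cliqueFree_card_lt {W : Type*} [Fintype W] {H : SimpleGraph W} {n : ℕ}
    (h : H.CliqueFree n) {s : Finset W} (hs : H.IsClique (s : Set W)) : s.card < n := by
  by_contra hc
  push_neg at hc
  obtain ⟨t, hts, htc⟩ := Finset.exists_subset_card_eq hc
  exact h t ⟨hs.subset (by exact_mod_cast hts), htc⟩

lemma cfin_card_one {W : Type*} [Fintype W] (H : SimpleGraph W) :
    (cfin H 1).card = Fintype.card W := by
  have h : cfin H 1 = Finset.univ.image (fun v : W => {v}) := by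
    ext s
    rw [mem_cfin]
    constructor
    · rintro ⟨hc, -⟩
      obtain ⟨v, rfl⟩ := Finset.card_eq_one.1 hc
      exact Finset.mem_image.2 ⟨v, Finset.mem_univ v, rfl⟩
    · rintro hs
      obtain ⟨v, -, rfl⟩ := Finset.mem_image.1 hs
      refine ⟨Finset.card_singleton v, ?_⟩
      simp only [Finset.coe_singleton]
      exact SimpleGraph.isClique_singleton v
  rw [h, Finset.card_image_of_injective _ Finset.singleton_injective, Finset.card_univ]

set_option maxHeartbeats 1000000 in
/-- Odd-dimensional Euler characteristic vanishes: if for every vertex `x` the unit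
sphere `S(x)` has Euler characteristic `2`, contains no clique on `4` vertices, and
every edge of `S(x)` lies in exactly two triangles of `S(x)` (that is, `G` is a
three-dimensional geometric graph), then `χ(G) = 0`. -/
theorem euler_char_vanishes_three_dimensional {V : Type*} [Fintype V] (G : SimpleGraph V)
    (hchi : ∀ x : V, eulerChar (unitSphere G x) = 2)
    (hK4 : ∀ x : V, (unitSphere G x).CliqueFree 4)
    (htri : ∀ x : V, ∀ a b : G.neighborSet x, (unitSphere G x).Adj a b →
      (Finset.univ.filter
        (fun c : G.neighborSet x =>
          (unitSphere G x).Adj a c ∧ (unitSphere G x).Adj b c)).card = 2) :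
    eulerChar G = 0 := by
  classical
  have hsum : ∀ k : ℕ, ∑ x : V, (cfin (unitSphere G x) k).card
      = (k + 1) * (cfin G (k + 1)).card := by
    intro k
    rw [Finset.sum_congr rfl (fun x _ => sphere_clique_card G x k), sum_mem_count,
      Finset.sum_congr rfl (fun t ht => (mem_cfin.1 ht).1), Finset.sum_const, smul_eq_mul,
      mul_comm]
  have h4s : ∀ x : V, cfin (unitSphere G x) 4 = ∅ := by
    intro x
    rw [Finset.eq_empty_iff_forall_notMem]
    intro s hs
    obtain ⟨hc, hcl⟩ := mem_cfin.1 hs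
    exact hK4 x s ⟨hcl, hc⟩
  have hb_s : ∀ x : V, ∀ s : Finset ↥(G.neighborSet x),
      (unitSphere G x).IsClique (s : Set _) → s.card ≤ 4 := by
    intro x s hs
    have := cliqueFree_card_lt (hK4 x) hs
    omega
  have hG5 : cfin G 5 = ∅ := by
    have h0 := hsum 4
    rw [Finset.sum_congr rfl (fun x _ => by rw [h4s x, Finset.card_empty]),
      Finset.sum_const, smul_eq_mul, mul_zero] at h0
    norm_num at h0
    exact h0
  have hbG : ∀ s : Finset V, G.IsClique (s : Set V) → s.card ≤ 4 := by
    intro s hs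
    by_contra h
    push_neg at h
    obtain ⟨t, hts, htc⟩ := Finset.exists_subset_card_eq (show 5 ≤ s.card by omega)
    have ht5 : t ∈ cfin G 5 := mem_cfin.2 ⟨htc, hs.subset (by exact_mod_cast hts)⟩
    rw [hG5] at ht5
    exact absurd ht5 (Finset.notMem_empty t)
  have hEx : ∀ x : V, ((cfin (unitSphere G x) 1).card : ℤ)
      - (cfin (unitSphere G x) 2).card + (cfin (unitSphere G x) 3).card = 2 := by
    intro x
    have h := eulerChar_eq (unitSphere G x) (hb_s x)
    rw [hchi x, h4s x] at h
    simp only [Finset.card_empty, Nat.cast_zero, sub_zero] at h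
    linarith
  have S1 := hsum 1
  have S2 := hsum 2
  have S3 := hsum 3
  norm_num at S1 S2 S3
  have hT : 2 * (3 * (cfin G 3).card) = 3 * (4 * (cfin G 4).card) := by
    rw [← S2, ← S3, Finset.mul_sum, Finset.mul_sum]
    exact Finset.sum_congr rfl (fun x _ => two_three _ (htri x))
  have hEsum : (2 * (cfin G 2).card : ℤ) - 3 * (cfin G 3).card + 4 * (cfin G 4).card
      = 2 * (cfin G 1).card := by
    have h := Finset.sum_congr rfl (fun x (_ : x ∈ (Finset.univ : Finset V)) => hEx x)
    rw [Finset.sum_const, Finset.sum_add_distrib, Finset.sum_sub_distrib,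
      Finset.card_univ, nsmul_eq_mul] at h
    rw [← Nat.cast_sum, ← Nat.cast_sum, ← Nat.cast_sum, S1, S2, S3] at h
    rw [cfin_card_one]
    push_cast at h ⊢
    linarith [h]
  have hfinal := eulerChar_eq G hbG
  rw [hfinal]
  have hT' : (2 : ℤ) * (3 * (cfin G 3).card) = 3 * (4 * (cfin G 4).card) := by
    exact_mod_cast hT
  linarith [hEsum, hT']
end

section
/- Expected Euler characteristic of Erdős–Rényi graphs: fix n ≥ 1 and p ∈ [0,1]. With respect to the Erdős–Rényi probability measure on simple graphs with vertex set {1,…,n}, which assigns to a graph G with m edges the probability p^m (1−p)^{n(n−1)/2 − m}, the expectation of the Euler characteristic equals E_{n,p}[χ] = Σ_{k=1}^{n} (−1)^{k+1} C(n,k) p^{C(k,2)}. -/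
open Classical Finset

/-- The Erdős–Rényi probability of a simple graph `G` on `n` vertices with edge
probability `p`: a graph with `m` edges has probability `p^m (1−p)^(n(n−1)/2 − m)`. -/
noncomputable def erWeight (n : ℕ) (p : ℝ) (G : SimpleGraph (Fin n)) : ℝ :=
  p ^ G.edgeFinset.card * (1 - p) ^ (n * (n - 1) / 2 - G.edgeFinset.card)

section Aux

variable {α : Type*} [DecidableEq α]

/-- total mass of the product measure on subsets of `Q` is 1. -/
lemma key_sum_one (p : ℝ) (Q : Finset α) :
    ∑ t ∈ Q.powerset, p ^ t.card * (1 - p) ^ (Q.card - t.card) = 1 := by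
  have h1 : ∀ t ∈ Q.powerset, (∏ _i ∈ t, p) * ∏ _i ∈ Q \ t, (1 - p)
      = p ^ t.card * (1 - p) ^ (Q.card - t.card) := by
    intro t ht
    rw [prod_const, prod_const, card_sdiff_of_subset (mem_powerset.mp ht)]
  rw [← Finset.sum_congr rfl h1, ← Finset.prod_add]
  simp

/-- probability that a fixed edge set `E0` is contained in the random subset. -/
lemma sum_er_superset (p : ℝ) (P E0 : Finset α) (h : E0 ⊆ P) :
    ∑ F ∈ P.powerset.filter (fun F => E0 ⊆ F),
      p ^ F.card * (1 - p) ^ (P.card - F.card) = p ^ E0.card := by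
  have hb : ∑ F ∈ P.powerset.filter (fun F => E0 ⊆ F),
      p ^ F.card * (1 - p) ^ (P.card - F.card)
      = ∑ t ∈ (P \ E0).powerset,
          p ^ E0.card * (p ^ t.card * (1 - p) ^ ((P \ E0).card - t.card)) := by
    refine Finset.sum_bij' (fun F _ => F \ E0) (fun t _ => t ∪ E0) ?_ ?_ ?_ ?_ ?_
    · intro F hF
      simp only [mem_filter, mem_powerset] at hF
      exact mem_powerset.mpr (sdiff_subset_sdiff hF.1 Subset.rfl)
    · intro t ht
      simp only [mem_powerset] at ht
      simp only [mem_filter, mem_powerset]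
      constructor
      · exact union_subset (ht.trans sdiff_subset) h
      · exact subset_union_right
    · intro F hF
      simp only [mem_filter, mem_powerset] at hF
      exact sdiff_union_of_subset hF.2
    · intro t ht
      simp only [mem_powerset] at ht
      have hdisj : Disjoint t E0 := Finset.sdiff_disjoint.mono_left ht
      rw [union_sdiff_distrib, sdiff_self]
      simpa using sdiff_eq_self_of_disjoint hdisj
    · intro F hF
      simp only [mem_filter, mem_powerset] at hF
      have h1 : E0.card ≤ F.card := card_le_card hF.2
      have h2 : F.card ≤ P.card := card_le_card hF.1
      have h3 : E0.card ≤ P.card := card_le_card h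
      rw [card_sdiff_of_subset hF.2, card_sdiff_of_subset h, ← mul_assoc, ← pow_add]
      congr 1
      · congr 1; omega
      · congr 1; omega
  rw [hb, ← Finset.mul_sum, key_sum_one, mul_one]

end Aux

/-- The clique edges of a vertex set `s`. -/
noncomputable def cliqueEdges {n : ℕ} (s : Finset (Fin n)) : Finset (Sym2 (Fin n)) :=
  s.sym2.filter (fun e => ¬ e.IsDiag)

lemma cliqueEdges_card {n : ℕ} (s : Finset (Fin n)) :
    (cliqueEdges s).card = s.card.choose 2 := by
  have hdiag : s.sym2.filter (fun e => e.IsDiag) = s.image Sym2.diag := by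
    ext e
    induction e using Sym2.ind with
    | _ a b =>
      simp only [mem_filter, Finset.mk_mem_sym2_iff, Sym2.mk_isDiag_iff, mem_image]
      constructor
      · rintro ⟨⟨ha, _⟩, rfl⟩
        exact ⟨a, ha, rfl⟩
      · rintro ⟨c, hc, hcab⟩
        rw [Sym2.diag, Sym2.eq_iff] at hcab
        rcases hcab with ⟨rfl, rfl⟩ | ⟨rfl, rfl⟩ <;> exact ⟨⟨hc, hc⟩, rfl⟩
  have hcard1 : (s.sym2.filter (fun e => e.IsDiag)).card = s.card := by
    rw [hdiag, Finset.card_image_of_injective _ Sym2.diag_injective]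
  have hsplit := Finset.card_filter_add_card_filter_not
    (s := s.sym2) (p := fun e => e.IsDiag)
  have hsym2 : s.sym2.card = (s.card + 1).choose 2 := Finset.card_sym2 s
  have hch : (s.card + 1).choose 2 = s.card.choose 2 + s.card := by
    rw [Nat.choose_succ_succ]
    simp [Nat.choose_one_right, Nat.add_comm]
  unfold cliqueEdges
  omega

lemma cliqueEdges_subset_top {n : ℕ} (s : Finset (Fin n)) :
    cliqueEdges s ⊆ (⊤ : SimpleGraph (Fin n)).edgeFinset := by
  intro e he
  simp only [cliqueEdges, mem_filter] at he
  rw [SimpleGraph.mem_edgeFinset, SimpleGraph.edgeSet_top]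
  exact he.2

lemma isClique_fromEdgeSet_iff {n : ℕ} (F : Finset (Sym2 (Fin n))) (s : Finset (Fin n)) :
    (SimpleGraph.fromEdgeSet (↑F : Set (Sym2 (Fin n)))).IsClique (s : Set (Fin n))
      ↔ cliqueEdges s ⊆ F := by
  rw [SimpleGraph.isClique_iff]
  constructor
  · intro hcl e he
    induction e using Sym2.ind with
    | _ a b =>
      simp only [cliqueEdges, mem_filter, Finset.mk_mem_sym2_iff, Sym2.mk_isDiag_iff] at he
      have := hcl (Finset.mem_coe.mpr he.1.1) (Finset.mem_coe.mpr he.1.2) he.2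
      rw [SimpleGraph.fromEdgeSet_adj] at this
      exact this.1
  · intro hce a ha b hb hab
    rw [SimpleGraph.fromEdgeSet_adj]
    refine ⟨hce ?_, hab⟩
    simp only [cliqueEdges, mem_filter, Finset.mk_mem_sym2_iff, Sym2.mk_isDiag_iff]
    exact ⟨⟨ha, hb⟩, hab⟩

lemma edgeFinset_fromEdgeSet_of_subset {n : ℕ} (F : Finset (Sym2 (Fin n)))
    (hF : F ⊆ (⊤ : SimpleGraph (Fin n)).edgeFinset)
    {inst : Fintype (SimpleGraph.fromEdgeSet (↑F : Set (Sym2 (Fin n)))).edgeSet} :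
    @SimpleGraph.edgeFinset _ _ inst = F := by
  have hnd : ∀ e ∈ F, ¬ e.IsDiag := by
    intro e he
    have := hF he
    rwa [SimpleGraph.mem_edgeFinset, SimpleGraph.edgeSet_top] at this
  ext e
  rw [SimpleGraph.mem_edgeFinset, SimpleGraph.edgeSet_fromEdgeSet]
  simp only [Set.mem_diff, Finset.mem_coe, Set.mem_setOf_eq]
  exact ⟨fun h => h.1, fun h => ⟨h, hnd e h⟩⟩

lemma edgeFinset_fromEdgeSet_of_subset' {n : ℕ} (F : Finset (Sym2 (Fin n)))
    (hF : F ⊆ (⊤ : SimpleGraph (Fin n)).edgeFinset) :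
    (SimpleGraph.fromEdgeSet (↑F : Set (Sym2 (Fin n)))).edgeFinset = F :=
  edgeFinset_fromEdgeSet_of_subset F hF

lemma sum_graphs_eq (n : ℕ) (f : SimpleGraph (Fin n) → ℝ) :
    ∑ G : SimpleGraph (Fin n), f G
      = ∑ F ∈ ((⊤ : SimpleGraph (Fin n)).edgeFinset).powerset,
          f (SimpleGraph.fromEdgeSet (↑F : Set (Sym2 (Fin n)))) := by
  refine Finset.sum_bij' (fun G _ => G.edgeFinset)
    (fun F _ => SimpleGraph.fromEdgeSet (↑F : Set (Sym2 (Fin n)))) ?_ ?_ ?_ ?_ ?_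
  · intro G _
    exact mem_powerset.mpr (SimpleGraph.edgeFinset_mono le_top)
  · intro F _
    exact mem_univ _
  · intro G _
    rw [SimpleGraph.coe_edgeFinset, SimpleGraph.fromEdgeSet_edgeSet]
  · intro F hF
    exact edgeFinset_fromEdgeSet_of_subset F (mem_powerset.mp hF)
  · intro G _
    rw [SimpleGraph.coe_edgeFinset, SimpleGraph.fromEdgeSet_edgeSet]

/-- Expected Euler characteristic of Erdős–Rényi graphs:
`E_{n,p}[χ] = Σ_{k=1}^{n} (−1)^{k+1} C(n,k) p^{C(k,2)}`. -/
theorem expected_euler_char (n : ℕ) (hn : 1 ≤ n) (p : ℝ) (hp0 : 0 ≤ p) (hp1 : p ≤ 1) :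
    ∑ G : SimpleGraph (Fin n), erWeight n p G * (eulerChar G : ℝ) =
      ∑ k ∈ Finset.Icc 1 n, (-1 : ℝ) ^ (k + 1) * (n.choose k : ℝ) * p ^ (k.choose 2) := by
  classical
  set P : Finset (Sym2 (Fin n)) := (⊤ : SimpleGraph (Fin n)).edgeFinset with hP
  have hPcard : P.card = n * (n - 1) / 2 := by
    rw [hP, SimpleGraph.card_edgeFinset_top_eq_card_choose_two, Fintype.card_fin,
      Nat.choose_two_right]
  rw [sum_graphs_eq n (fun G => erWeight n p G * (eulerChar G : ℝ))]
  have hstep : ∀ F ∈ P.powerset,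
      erWeight n p (SimpleGraph.fromEdgeSet (↑F : Set (Sym2 (Fin n))))
        * ((eulerChar (SimpleGraph.fromEdgeSet (↑F : Set (Sym2 (Fin n))))) : ℝ)
      = ∑ s ∈ Finset.univ.powerset.filter (fun s : Finset (Fin n) => s.Nonempty),
          (if cliqueEdges s ⊆ F then
            ((-1 : ℝ) ^ (s.card + 1) * (p ^ F.card * (1 - p) ^ (P.card - F.card))) else 0) := by
    intro F hF
    rw [erWeight, edgeFinset_fromEdgeSet_of_subset F (hP ▸ mem_powerset.mp hF), eulerChar]
    push_cast
    rw [Finset.mul_sum, hPcard, Finset.sum_filter, Finset.sum_filter]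
    apply Finset.sum_congr rfl
    intro s _
    have hiff := isClique_fromEdgeSet_iff F s
    by_cases h2 : s.Nonempty
    · by_cases h3 : cliqueEdges s ⊆ F
      · rw [if_pos (⟨h2, hiff.mpr h3⟩ :
          s.Nonempty ∧ (SimpleGraph.fromEdgeSet (↑F : Set (Sym2 (Fin n)))).IsClique
            (s : Set (Fin n))), if_pos h2, if_pos h3]
        ring
      · rw [if_neg (fun h => h3 (hiff.mp (h.2 :
          (SimpleGraph.fromEdgeSet (↑F : Set (Sym2 (Fin n)))).IsClique (s : Set (Fin n))))),
          if_pos h2, if_neg h3]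
    · rw [if_neg (fun h => h2 (h.1 : s.Nonempty)), if_neg h2]
  rw [Finset.sum_congr rfl hstep, Finset.sum_comm]
  have hinner : ∀ s ∈ Finset.univ.powerset.filter (fun s : Finset (Fin n) => s.Nonempty),
      (∑ F ∈ P.powerset,
        if cliqueEdges s ⊆ F then
          ((-1 : ℝ) ^ (s.card + 1) * (p ^ F.card * (1 - p) ^ (P.card - F.card))) else 0)
      = (-1 : ℝ) ^ (s.card + 1) * p ^ (s.card.choose 2) := by
    intro s _
    rw [← Finset.sum_filter, ← Finset.mul_sum,
      sum_er_superset p P (cliqueEdges s) (cliqueEdges_subset_top s),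
      cliqueEdges_card]
  rw [Finset.sum_congr rfl hinner]
  have hform : ∀ s : Finset (Fin n),
      (if s.Nonempty then (-1 : ℝ) ^ (s.card + 1) * p ^ (s.card.choose 2) else 0)
      = if s.card = 0 then 0 else (-1 : ℝ) ^ (s.card + 1) * p ^ (s.card.choose 2) := by
    intro s
    by_cases h : s.Nonempty
    · rw [if_pos h, if_neg (Finset.card_ne_zero.mpr h)]
    · rw [if_neg h, if_pos]
      rwa [Finset.card_eq_zero, ← Finset.not_nonempty_iff_eq_empty]
  have hps := Finset.sum_powerset_apply_card
    (f := fun m : ℕ => if m = 0 then (0 : ℝ) else (-1 : ℝ) ^ (m + 1) * p ^ (m.choose 2))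
    (x := (Finset.univ : Finset (Fin n)))
  rw [Finset.sum_filter, Finset.sum_congr rfl (fun s _ => hform s), hps]
  rw [Finset.card_univ, Fintype.card_fin]
  have hrange : Finset.range (n + 1) = insert 0 (Finset.Icc 1 n) := by
    ext m
    simp only [Finset.mem_range, Finset.mem_insert, Finset.mem_Icc]
    omega
  rw [hrange, Finset.sum_insert (by simp), if_pos rfl, smul_zero, zero_add]
  apply Finset.sum_congr rfl
  intro m hm
  rw [Finset.mem_Icc] at hm
  rw [if_neg (by omega), nsmul_eq_mul]
  ring
end

section
/- Exponential growth of extremal Euler characteristic: there exists a constant c > 0 and an integer N such that for every n ≥ N there exists a simple graph G on n vertices with χ(G) > e^{c·n}, and there exists a simple graph H on n vertices with χ(H) < −e^{c·n}. -/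
open Classical Finset

/-!
A clique of the complete multipartite graph with parts `P₁, …, P_r` meets each part at most
once, which gives `1 - χ = ∏ᵢ (1 - |Pᵢ|)`. With `m` parts of size `3` and one part of size
`a ≥ 3` this is `(-2)^m (1 - a)`; taking `m` or `m + 1` parts of size `3` on the same
`n ≥ 3m + 6` vertices gives both signs and `|χ| > 2^m` with `m ≈ n / 3`.
-/

namespace SimpleGraph

variable {V : Type*} (G : SimpleGraph V)

/-- The clique polynomial of `G[S]` evaluated at `-1`, the empty clique included. -/
noncomputable def alternatingCliqueSum (S : Finset V) : ℤ :=
  ∑ s ∈ S.powerset.filter (fun s : Finset V => G.IsClique (s : Set V)), (-1) ^ #s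

@[simp]
lemma alternatingCliqueSum_empty : G.alternatingCliqueSum ∅ = 1 := by
  simp [alternatingCliqueSum, filter_singleton]

lemma eulerChar_eq_one_sub_alternatingCliqueSum [Fintype V] :
    eulerChar G = 1 - G.alternatingCliqueSum univ := by
  have hsplit := sum_filter_add_sum_filter_not
    (univ.powerset.filter fun s : Finset V => G.IsClique (s : Set V))
    Finset.Nonempty (fun s : Finset V => (-1 : ℤ) ^ #s)
  rw [filter_filter, filter_filter] at hsplit
  have hempty : (univ.powerset.filter fun s : Finset V =>
      G.IsClique (s : Set V) ∧ ¬ s.Nonempty) = {∅} := by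
    ext s
    simp only [mem_filter, mem_powerset, subset_univ, true_and, not_nonempty_iff_eq_empty,
      mem_singleton]
    exact ⟨And.right, fun h => ⟨h ▸ by simp, h⟩⟩
  rw [hempty, sum_singleton] at hsplit
  simp only [eulerChar, alternatingCliqueSum, ← hsplit, pow_succ, mul_neg_one, sum_neg_distrib,
    and_comm (a := Finset.Nonempty _)]
  simp

/-- The cliques through `v` are `v` together with a clique of its neighbourhood. -/
lemma alternatingCliqueSum_insert {v : V} {S : Finset V} (hv : v ∉ S) :
    G.alternatingCliqueSum (insert v S) =
      G.alternatingCliqueSum S - G.alternatingCliqueSum {w ∈ S | G.Adj v w} := by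
  have hcliques :
      S.powerset.filter (fun t : Finset V => G.IsClique ((insert v t : Finset V) : Set V)) =
        {w ∈ S | G.Adj v w}.powerset.filter (fun t : Finset V => G.IsClique (t : Set V)) := by
    ext t
    simp only [mem_filter, mem_powerset, coe_insert, isClique_insert, subset_iff]
    constructor
    · rintro ⟨hts, htG, hvt⟩
      exact ⟨fun w hw => ⟨hts hw, hvt w hw (ne_of_mem_of_not_mem (hts hw) hv).symm⟩, htG⟩
    · rintro ⟨htN, htG⟩
      exact ⟨fun w hw => (htN hw).1, htG, fun w hw _ => (htN hw).2⟩
  simp only [alternatingCliqueSum]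
  rw [sum_filter, sum_powerset_insert hv, ← sum_filter, ← sum_filter, hcliques, sub_eq_add_neg,
    ← sum_neg_distrib]
  refine congrArg _ (sum_congr rfl fun t ht => ?_)
  have hvt : v ∉ t := fun hvt => hv (mem_filter.1 (mem_powerset.1 (mem_filter.1 ht).1 hvt)).1
  rw [card_insert_of_notMem hvt, pow_succ, mul_neg_one]

/-- `(⊤ : SimpleGraph I).comap f` is the complete multipartite graph whose parts are the fibres
of `f`. -/
lemma alternatingCliqueSum_comap_top {I : Type*} [DecidableEq I] (f : V → I) (T : Finset I)
    (S : Finset V) (hS : ∀ v ∈ S, f v ∈ T) :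
    ((⊤ : SimpleGraph I).comap f).alternatingCliqueSum S =
      ∏ i ∈ T, (1 - #{v ∈ S | f v = i} : ℤ) := by
  induction S using Finset.strongInduction with
  | H S ih =>
  rcases S.eq_empty_or_nonempty with rfl | ⟨v, hv⟩
  · simp
  obtain ⟨S, hvS, rfl⟩ : ∃ S', v ∉ S' ∧ insert v S' = S :=
    ⟨S.erase v, notMem_erase v S, insert_erase hv⟩
  have hST : ∀ w ∈ S, f w ∈ T := fun w hw => hS w (mem_insert_of_mem hw)
  have hfv : f v ∈ T := hS v (mem_insert_self v S)
  rw [alternatingCliqueSum_insert _ hvS]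
  simp only [comap_adj, top_adj]
  rw [ih S (ssubset_insert hvS) hST,
    ih _ ((filter_subset _ S).trans_ssubset (ssubset_insert hvS))
      fun w hw => hST w (mem_filter.1 hw).1,
    ← mul_prod_erase T _ hfv, ← mul_prod_erase T _ hfv, ← mul_prod_erase T _ hfv]
  have hpart (j : I) :
      #{w ∈ insert v S | f w = j} = #{w ∈ S | f w = j} + if f v = j then 1 else 0 := by
    rw [filter_insert]
    split_ifs
    · exact card_insert_of_notMem fun hv => hvS (mem_filter.1 hv).1
    · rfl
  have hempty : {w ∈ {x ∈ S | f v ≠ f x} | f w = f v} = ∅ :=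
    filter_false_of_mem fun w hw => ((mem_filter.1 hw).2 ·.symm)
  have hprod_adj : ∏ j ∈ T.erase (f v), (1 - #{w ∈ {x ∈ S | f v ≠ f x} | f w = j} : ℤ) =
      ∏ j ∈ T.erase (f v), (1 - #{w ∈ S | f w = j} : ℤ) := by
    refine prod_congr rfl fun j hj => ?_
    rw [filter_filter, filter_congr fun w _ => and_iff_right_of_imp fun h : f w = j =>
      h ▸ (ne_of_mem_erase hj).symm]
  have hprod_insert : ∏ j ∈ T.erase (f v), (1 - #{w ∈ insert v S | f w = j} : ℤ) =
      ∏ j ∈ T.erase (f v), (1 - #{w ∈ S | f w = j} : ℤ) :=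
    prod_congr rfl fun j hj => by rw [hpart j, if_neg (ne_of_mem_erase hj).symm, add_zero]
  rw [hprod_adj, hprod_insert, hempty, hpart, if_pos rfl, card_empty]
  push_cast
  ring

end SimpleGraph

lemma Fin.card_filter_univ_val (n : ℕ) (p : ℕ → Prop) [DecidablePred p] :
    #{v : Fin n | p v} = #{x ∈ range n | p x} := by
  rw [← Nat.Iio_eq_range, ← Fin.map_valEmbedding_univ, filter_map, card_map]
  rfl

lemma card_filter_min_div_three_eq {n m i : ℕ} (hm : 3 * m ≤ n) (hi : i < m) :
    #{v : Fin n | min ((v : ℕ) / 3) m = i} = 3 := by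
  rw [Fin.card_filter_univ_val n fun x => min (x / 3) m = i,
    show {x ∈ range n | min (x / 3) m = i} = Ico (3 * i) (3 * i + 3) by
      ext x; simp only [mem_filter, mem_range, mem_Ico]; omega]
  simp

lemma card_filter_min_div_three_eq_self (n m : ℕ) :
    #{v : Fin n | min ((v : ℕ) / 3) m = m} = n - 3 * m := by
  rw [Fin.card_filter_univ_val n fun x => min (x / 3) m = m,
    show {x ∈ range n | min (x / 3) m = m} = Ico (3 * m) n by
      ext x; simp only [mem_filter, mem_range, mem_Ico]; omega]
  simp

/-- The witness has `m` parts of size `3` and one part of size `n - 3m`. -/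
lemma exists_eulerChar_eq {n m : ℕ} (hm : 3 * m ≤ n) :
    ∃ G : SimpleGraph (Fin n), eulerChar G = 1 + (-2) ^ m * ((n : ℤ) - 3 * m - 1) := by
  refine ⟨(⊤ : SimpleGraph ℕ).comap fun v : Fin n => min ((v : ℕ) / 3) m, ?_⟩
  rw [SimpleGraph.eulerChar_eq_one_sub_alternatingCliqueSum,
    SimpleGraph.alternatingCliqueSum_comap_top _ (range (m + 1)) _ fun v _ => by simp,
    prod_range_succ, card_filter_min_div_three_eq_self,
    prod_congr rfl fun i hi => by rw [card_filter_min_div_three_eq hm (mem_range.1 hi)]]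
  simp only [prod_const, card_range]
  push_cast [hm]
  ring

lemma exists_eulerChar_gt_and_lt {n m : ℕ} (hm : 3 * (m + 2) ≤ n) :
    (∃ G : SimpleGraph (Fin n), 2 ^ m < eulerChar G) ∧
      ∃ H : SimpleGraph (Fin n), eulerChar H < -2 ^ m := by
  obtain ⟨G, hG⟩ := exists_eulerChar_eq (n := n) (m := m) (by omega)
  obtain ⟨G', hG'⟩ := exists_eulerChar_eq (n := n) (m := m + 1) (by omega)
  have hpos : (0 : ℤ) < 2 ^ m := by positivity
  have hn : (3 * (m + 2) : ℤ) ≤ n := by exact_mod_cast hm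
  rw [pow_succ] at hG'
  push_cast at hG'
  rcases Nat.even_or_odd m with hm | hm
  · rw [hm.neg_pow] at hG hG'
    exact ⟨⟨G, by nlinarith⟩, G', by nlinarith⟩
  · rw [hm.neg_pow] at hG hG'
    exact ⟨⟨G', by nlinarith⟩, G, by nlinarith⟩

/-- Exponential growth of the extremal Euler characteristic: there are `c > 0` and `N`
such that for every `n ≥ N` some graph on `n` vertices has `χ > e^{c·n}` and some graph
on `n` vertices has `χ < −e^{c·n}`. -/
theorem extremal_euler_char_exponential :
    ∃ c : ℝ, 0 < c ∧ ∃ N : ℕ, ∀ n : ℕ, N ≤ n →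
      (∃ G : SimpleGraph (Fin n), (eulerChar G : ℝ) > Real.exp (c * n)) ∧
      (∃ H : SimpleGraph (Fin n), (eulerChar H : ℝ) < -Real.exp (c * n)) := by
  refine ⟨Real.log 2 / 6, by positivity, 16, fun n hn => ?_⟩
  set m := n / 3 - 2
  obtain ⟨⟨G, hG⟩, H, hH⟩ := exists_eulerChar_gt_and_lt (n := n) (m := m) (by omega)
  have hexp : Real.exp (Real.log 2 / 6 * n) ≤ 2 ^ m := by
    have hnm : (n : ℝ) ≤ 6 * m := by exact_mod_cast (by omega : n ≤ 6 * m)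
    rw [show (2 : ℝ) ^ m = Real.exp (m * Real.log 2) by
      rw [Real.exp_nat_mul, Real.exp_log two_pos]]
    exact Real.exp_le_exp.2 (by nlinarith [Real.log_pos one_lt_two])
  refine ⟨⟨G, hexp.trans_lt (by exact_mod_cast hG)⟩, H, ?_⟩
  exact (by exact_mod_cast hH : (eulerChar H : ℝ) < -2 ^ m).trans_le (neg_le_neg hexp)
end
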